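/- arXiv:2505.13853 — 6 statements merged into one kernel-verified Lean document; each statement's English description precedes it below -/
import Mathlib

section
/- The three Hamiltonian functions h1(q,p) = (1/2)∑_{i=1}^n q_i², h2(q,p) = -(1/2)∑_{i=1}^n q_i p_i, h3(q,p) = (1/2)∑_{i=1}^n (p_i² + c_i/q_i²) on T*ℝⁿ (with q_i ≠ 0 where c_i ≠ 0) satisfy the Poisson bracket relations {h1,h2} = -h1, {h1,h3} = -2h2, {h2,h3} = -h3 with respect to the canonical Poisson bracket, and hence span a Lie algebra isomorphic to sl(2,ℝ). -/
/-!
Each of `h1`, `h2`, `h3` is a sum over `i` of a function of the single pair `(q i, p i)`, so its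
partial derivatives are one-variable derivatives of the `i`-th summand. The three bracket relations
then hold summand by summand, e.g. for `{h2, h3}`:
`-(p i / 2) * p i - (-(c i / q i ^ 3)) * (-(q i / 2)) = -(1/2) * (p i ^ 2 + c i / q i ^ 2)`.
-/

open Finset

/-- Partial derivative of a function on `Fin k → ℝ` in the `i`-th coordinate. -/
noncomputable def pd {k : ℕ} (f : (Fin k → ℝ) → ℝ) (x : Fin k → ℝ) (i : Fin k) : ℝ :=
  deriv (fun t => f (Function.update x i t)) (x i)

/-- Canonical Poisson bracket on `T*ℝⁿ`:
`{f,g} = ∑ i (∂f/∂q_i ∂g/∂p_i − ∂g/∂q_i ∂f/∂p_i)`. -/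
noncomputable def pbracket (n : ℕ) (f g : (Fin n → ℝ) → (Fin n → ℝ) → ℝ)
    (q p : Fin n → ℝ) : ℝ :=
  ∑ i, (pd (fun q' => f q' p) q i * pd (g q) p i -
        pd (fun q' => g q' p) q i * pd (f q) p i)

section PartialDerivative

variable {k : ℕ} (x : Fin k → ℝ) (i : Fin k)

theorem pd_const (a : ℝ) : pd (fun _ => a) x i = 0 :=
  deriv_const _ a

theorem pd_const_mul (a : ℝ) (f : (Fin k → ℝ) → ℝ) :
    pd (fun y => a * f y) x i = a * pd f x i := by
  simp only [pd, deriv_const_mul_field']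

theorem pd_neg (f : (Fin k → ℝ) → ℝ) : pd (fun y => -f y) x i = -pd f x i :=
  deriv.neg

theorem pd_sum_apply (g : Fin k → ℝ → ℝ) :
    pd (fun y => ∑ j, g j (y j)) x i = deriv (g i) (x i) := by
  have hsplit : (fun t => ∑ j, g j (Function.update x i t j))
      = fun t => g i t + ∑ j ∈ univ.erase i, g j (x j) := by
    funext t
    rw [← add_sum_erase _ _ (mem_univ i), Function.update_self]
    congr 1
    exact sum_congr rfl fun j hj => by rw [Function.update_of_ne (ne_of_mem_erase hj)]
  simp only [pd, hsplit, deriv_add_const]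

end PartialDerivative

theorem deriv_const_div_sq {b x : ℝ} (hx : b ≠ 0 → x ≠ 0) :
    deriv (fun t => b / t ^ 2) x = -(2 * b / x ^ 3) := by
  rcases eq_or_ne b 0 with rfl | hb
  · simp
  have hx' := hx hb
  rw [deriv_const_div b (differentiableAt_pow 2) (pow_ne_zero 2 hx'), deriv_pow_field]
  field_simp
  ring

section SmorodinskyWinternitz

variable {n : ℕ} (c : Fin n → ℝ) (q p : Fin n → ℝ) (i : Fin n)

noncomputable def swH1 (q _ : Fin n → ℝ) : ℝ :=
  (1 / 2) * ∑ i, (q i) ^ 2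

noncomputable def swH2 (q p : Fin n → ℝ) : ℝ :=
  -((1 / 2) * ∑ i, q i * p i)

noncomputable def swH3 (q p : Fin n → ℝ) : ℝ :=
  (1 / 2) * ∑ i, ((p i) ^ 2 + c i / (q i) ^ 2)

theorem pd_swH1_q : pd (fun q' => swH1 q' p) q i = q i := by
  unfold swH1
  rw [pd_const_mul, pd_sum_apply _ _ (fun _ t => t ^ 2)]
  simp

theorem pd_swH1_p : pd (swH1 q) p i = 0 :=
  pd_const p i _

theorem pd_swH2_q : pd (fun q' => swH2 q' p) q i = -(1 / 2 * p i) := by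
  unfold swH2
  rw [pd_neg, pd_const_mul, pd_sum_apply _ _ (fun j t => t * p j)]
  simp

theorem pd_swH2_p : pd (swH2 q) p i = -(1 / 2 * q i) := by
  unfold swH2
  rw [pd_neg, pd_const_mul, pd_sum_apply _ _ (fun j t => q j * t)]
  simp

theorem pd_swH3_q (hq : c i ≠ 0 → q i ≠ 0) :
    pd (fun q' => swH3 c q' p) q i = -(c i / q i ^ 3) := by
  unfold swH3
  rw [pd_const_mul, pd_sum_apply _ _ (fun j t => p j ^ 2 + c j / t ^ 2)]
  simp only [deriv_const_add', deriv_const_div_sq hq]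
  ring

theorem pd_swH3_p : pd (swH3 c q) p i = p i := by
  unfold swH3
  rw [pd_const_mul, pd_sum_apply _ _ (fun j t => t ^ 2 + c j / q j ^ 2)]
  simp

theorem pbracket_swH1_swH2 : pbracket n swH1 swH2 q p = -swH1 q p := by
  simp only [pbracket, pd_swH1_q, pd_swH1_p, pd_swH2_p, mul_zero, sub_zero]
  rw [swH1, mul_sum, ← sum_neg_distrib]
  exact sum_congr rfl fun i _ => by ring

theorem pbracket_swH1_swH3 : pbracket n swH1 (swH3 c) q p = -2 * swH2 q p := by
  simp only [pbracket, pd_swH1_q, pd_swH1_p, pd_swH3_p, mul_zero, sub_zero]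
  rw [swH2]
  ring

theorem pbracket_swH2_swH3 (hq : ∀ i, c i ≠ 0 → q i ≠ 0) :
    pbracket n swH2 (swH3 c) q p = -swH3 c q p := by
  simp only [pbracket, pd_swH2_q, pd_swH2_p, pd_swH3_p, pd_swH3_q c q p _ (hq _)]
  rw [swH3, mul_sum, ← sum_neg_distrib]
  refine sum_congr rfl fun i _ => ?_
  rcases eq_or_ne (q i) 0 with hqi | hqi
  · -- both sides of `c i / q i ^ 3 * q i = c i / q i ^ 2` are junk zeros here
    rw [hqi]
    ring
  · field_simp
    ring

end SmorodinskyWinternitz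

/-- The Smorodinsky–Winternitz Hamiltonian functions
`h1 = (1/2)∑ q_i²`, `h2 = -(1/2)∑ q_i p_i`, `h3 = (1/2)∑ (p_i² + c_i/q_i²)`
satisfy `{h1,h2} = -h1`, `{h1,h3} = -2 h2`, `{h2,h3} = -h3`
(on the open set where `q_i ≠ 0` whenever `c_i ≠ 0`); hence they span a Lie
algebra of functions isomorphic to `sl(2,ℝ)`. -/
theorem sw_functions_sl2 (n : ℕ) (c : Fin n → ℝ)
    (h1 h2 h3 : (Fin n → ℝ) → (Fin n → ℝ) → ℝ)
    (hh1 : h1 = fun q _ => (1 / 2) * ∑ i, (q i) ^ 2)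
    (hh2 : h2 = fun q p => -((1 / 2) * ∑ i, q i * p i))
    (hh3 : h3 = fun q p => (1 / 2) * ∑ i, ((p i) ^ 2 + c i / (q i) ^ 2))
    (q p : Fin n → ℝ) (hq : ∀ i, c i ≠ 0 → q i ≠ 0) :
    pbracket n h1 h2 q p = -(h1 q p) ∧
    pbracket n h1 h3 q p = -2 * h2 q p ∧
    pbracket n h2 h3 q p = -(h3 q p) := by
  obtain rfl : h1 = swH1 := hh1
  obtain rfl : h2 = swH2 := hh2
  obtain rfl : h3 = swH3 c := hh3
  exact ⟨pbracket_swH1_swH2 q p, pbracket_swH1_swH3 c q p, pbracket_swH2_swH3 c q p hq⟩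
end

section
/- The vector fields X1 = -∑_i q_i ∂/∂p_i, X2 = (1/2)∑_i (p_i ∂/∂p_i − q_i ∂/∂q_i), X3 = ∑_i (p_i ∂/∂q_i + (c_i/q_i³) ∂/∂p_i) on T*ℝⁿ satisfy the commutation relations [X1,X2] = X1, [X1,X3] = 2X2, [X2,X3] = X3, hence span a Lie algebra of vector fields isomorphic to sl(2,ℝ). -/
/-! Write a point of `T*ℝⁿ` as `(q, p)` and `X3 = (p, F q)` with `F q = (c_i / q_i³)_i`.
Since `X1` and `X2` are linear, every bracket is a difference of two compositions of
derivatives, and the first two relations hold for any `F`. The third one reduces to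
`DF(q) q = -3 F(q)`, Euler's identity for the degree `-3` homogeneous field `F`. -/

/-- Commutator (Lie bracket) of two vector fields on a normed space,
`[X,Y](x) = DY_x(X(x)) − DX_x(Y(x))`, i.e. `[X,Y]^i = X^j ∂_j Y^i − Y^j ∂_j X^i`. -/
noncomputable def vbracket {E : Type*} [NormedAddCommGroup E] [NormedSpace ℝ E]
    (X Y : E → E) (x : E) : E :=
  fderiv ℝ Y x (X x) - fderiv ℝ X x (Y x)

theorem vbracket_eq_of_hasFDerivAt {E : Type*} [NormedAddCommGroup E] [NormedSpace ℝ E]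
    {X Y : E → E} {X' Y' : E →L[ℝ] E} {x : E} (hX : HasFDerivAt X X' x)
    (hY : HasFDerivAt Y Y' x) : vbracket X Y x = Y' (X x) - X' (Y x) := by
  rw [vbracket, hX.fderiv, hY.fderiv]

theorem hasDerivAt_div_pow (a t : ℝ) (k : ℕ) (ht : a ≠ 0 → t ≠ 0) :
    HasDerivAt (fun s => a / s ^ k) (-k * a / t ^ (k + 1)) t := by
  rcases eq_or_ne a 0 with rfl | ha
  · simpa using hasDerivAt_const t (0 : ℝ)
  · have ht := ht ha
    refine ((hasDerivAt_const t a).fun_div (hasDerivAt_pow k t) (pow_ne_zero k ht)).congr_deriv ?_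
    rcases k with _ | k
    · simp
    · rw [Nat.add_sub_cancel]
      field_simp
      ring

theorem neg_mul_div_pow_succ_mul (a t : ℝ) (k : ℕ) (ht : a ≠ 0 → t ≠ 0) :
    -k * a / t ^ (k + 1) * t = -k * (a / t ^ k) := by
  rcases eq_or_ne a 0 with rfl | ha
  · simp
  · field_simp [ht ha]
    ring

theorem hasFDerivAt_pi_div_pow_euler {ι : Type*} [Fintype ι] (c q : ι → ℝ) (k : ℕ)
    (hq : ∀ i, c i ≠ 0 → q i ≠ 0) :
    ∃ F' : (ι → ℝ) →L[ℝ] ι → ℝ, HasFDerivAt (fun q i => c i / q i ^ k) F' q ∧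
      F' q = (-k : ℝ) • fun i => c i / q i ^ k := by
  refine ⟨ContinuousLinearMap.pi fun i =>
    (-k * c i / q i ^ (k + 1)) • ContinuousLinearMap.proj (R := ℝ) i, ?_, ?_⟩
  · exact hasFDerivAt_pi.2 fun i =>
      (hasDerivAt_div_pow (c i) (q i) k (hq i)).comp_hasFDerivAt (h₂ := fun s => c i / s ^ k) q
        (hasFDerivAt_apply i q)
  · ext i
    simpa using neg_mul_div_pow_succ_mul (c i) (q i) k (hq i)

theorem vbracket_sl2_of_euler {E : Type*} [NormedAddCommGroup E] [NormedSpace ℝ E]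
    {F : E → E} {F' : E →L[ℝ] E} {x : E × E}
    (hF : HasFDerivAt F F' x.1) (hEuler : F' x.1 = (-3 : ℝ) • F x.1) :
    let X1 : E × E → E × E := fun x => (0, -x.1)
    let X2 : E × E → E × E := fun x => (-(1 / 2 : ℝ) • x.1, (1 / 2 : ℝ) • x.2)
    let X3 : E × E → E × E := fun x => (x.2, F x.1)
    vbracket X1 X2 x = X1 x ∧ vbracket X1 X3 x = (2 : ℝ) • X2 x ∧
      vbracket X2 X3 x = X3 x := by
  intro X1 X2 X3
  have hfst : HasFDerivAt (Prod.fst : E × E → E) _ x := hasFDerivAt_fst (𝕜 := ℝ)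
  have hsnd : HasFDerivAt (Prod.snd : E × E → E) _ x := hasFDerivAt_snd (𝕜 := ℝ)
  have h1 : HasFDerivAt X1 _ x := (hasFDerivAt_const 0 x).prodMk hfst.neg
  have h2 : HasFDerivAt X2 _ x := (hfst.const_smul _).prodMk (hsnd.const_smul _)
  have h3 : HasFDerivAt X3 _ x := hsnd.prodMk (hF.comp x hfst)
  rw [vbracket_eq_of_hasFDerivAt h1 h2, vbracket_eq_of_hasFDerivAt h1 h3,
    vbracket_eq_of_hasFDerivAt h2 h3]
  simp only [X1, X2, X3, ContinuousLinearMap.prod_apply, ContinuousLinearMap.comp_apply,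
    ContinuousLinearMap.coe_fst', ContinuousLinearMap.coe_snd', smul_apply, neg_apply, zero_apply,
    map_smul, map_zero, hEuler, Prod.mk_sub_mk, Prod.smul_mk, Prod.mk.injEq]
  refine ⟨⟨?_, ?_⟩, ⟨?_, ?_⟩, ⟨?_, ?_⟩⟩ <;> module

/-- The vector fields `X1 = -∑ q_i ∂/∂p_i`, `X2 = (1/2)∑ (p_i ∂/∂p_i − q_i ∂/∂q_i)`,
`X3 = ∑ (p_i ∂/∂q_i + (c_i/q_i³) ∂/∂p_i)` on `T*ℝⁿ` satisfy
`[X1,X2] = X1`, `[X1,X3] = 2X2`, `[X2,X3] = X3` (on the open set where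
`q_i ≠ 0` whenever `c_i ≠ 0`); hence they span a Lie algebra of vector fields
isomorphic to `sl(2,ℝ)`. A point of `T*ℝⁿ` is a pair `(q, p)`. -/
theorem sw_vector_fields_sl2 (n : ℕ) (c : Fin n → ℝ)
    (X1 X2 X3 : (Fin n → ℝ) × (Fin n → ℝ) → (Fin n → ℝ) × (Fin n → ℝ))
    (hX1 : X1 = fun x => (0, fun i => -(x.1 i)))
    (hX2 : X2 = fun x => (fun i => -(1 / 2) * x.1 i, fun i => (1 / 2) * x.2 i))
    (hX3 : X3 = fun x => (x.2, fun i => c i / (x.1 i) ^ 3))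
    (x : (Fin n → ℝ) × (Fin n → ℝ)) (hq : ∀ i, c i ≠ 0 → x.1 i ≠ 0) :
    vbracket X1 X2 x = X1 x ∧
    vbracket X1 X3 x = (2 : ℝ) • X2 x ∧
    vbracket X2 X3 x = X3 x := by
  subst hX1 hX2 hX3
  obtain ⟨F', hF, hEuler⟩ := hasFDerivAt_pi_div_pow_euler c x.1 3 hq
  exact vbracket_sl2_of_euler hF (by exact_mod_cast hEuler)
end

section
/- The function Ψ(x₁,x₂,x₃;k) = (x₁(x₃−x₂) + k·x₃(x₁−x₂)) / ((x₃−x₂) + k(x₁−x₂)) is a superposition rule for the Riccati equation: if x₁(t), x₂(t), x₃(t) are three distinct solutions of dx/dt = b₁(t) + b₂(t)x + b₃(t)x², then for any constant k, the function x(t) = Ψ(x₁(t),x₂(t),x₃(t);k) is also a solution, wherever the denominator is nonzero. -/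
/-!
Solving `(x - x₁)(x₃ - x₂) = k (x₃ - x)(x₁ - x₂)` for `x` gives `Ψ(x₁, x₂, x₃; k)`, so `x` is the
curve whose cross ratio with `x₁, x₂, x₃` is the constant `k`. Riccati flows act on the
projective line by Möbius transformations, which preserve cross ratios, so `x` is again a
solution. Formally this is a pointwise computation: the quotient rule applied to `Ψ`, with each
`xᵢ'` replaced by `b₁ + b₂ xᵢ + b₃ xᵢ²`, gives `b₁ + b₂ x + b₃ x²` once the denominator is cleared.
-/

noncomputable def riccatiSuperposition (y1 y2 y3 k : ℝ) : ℝ :=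
  (y1 * (y3 - y2) + k * y3 * (y1 - y2)) / ((y3 - y2) + k * (y1 - y2))

lemma HasDerivAt.riccatiSuperposition {x1 x2 x3 : ℝ → ℝ} {c1 c2 c3 k t : ℝ}
    (h1 : HasDerivAt x1 (c1 + c2 * x1 t + c3 * x1 t ^ 2) t)
    (h2 : HasDerivAt x2 (c1 + c2 * x2 t + c3 * x2 t ^ 2) t)
    (h3 : HasDerivAt x3 (c1 + c2 * x3 t + c3 * x3 t ^ 2) t)
    (hden : (x3 t - x2 t) + k * (x1 t - x2 t) ≠ 0) :
    let x : ℝ → ℝ := fun s => riccatiSuperposition (x1 s) (x2 s) (x3 s) k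
    HasDerivAt x (c1 + c2 * x t + c3 * x t ^ 2) t := by
  have hnum := (h1.mul (h3.sub h2)).add ((h3.const_mul k).mul (h1.sub h2))
  have hdiff := (h3.sub h2).add ((h1.sub h2).const_mul k)
  refine (hnum.div hdiff hden).congr_deriv ?_
  simp only [_root_.riccatiSuperposition, Pi.add_apply, Pi.sub_apply, Pi.mul_apply]
  field_simp
  ring

theorem riccati_superposition_rule_general
    (b1 b2 b3 x1 x2 x3 : ℝ → ℝ)
    (hd1 : Differentiable ℝ x1) (hd2 : Differentiable ℝ x2)
    (hd3 : Differentiable ℝ x3)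
    (he1 : ∀ t, deriv x1 t = b1 t + b2 t * x1 t + b3 t * (x1 t) ^ 2)
    (he2 : ∀ t, deriv x2 t = b1 t + b2 t * x2 t + b3 t * (x2 t) ^ 2)
    (he3 : ∀ t, deriv x3 t = b1 t + b2 t * x3 t + b3 t * (x3 t) ^ 2)
    (k : ℝ) (x : ℝ → ℝ)
    (hx : x = fun s =>
      (x1 s * (x3 s - x2 s) + k * x3 s * (x1 s - x2 s)) /
        ((x3 s - x2 s) + k * (x1 s - x2 s)))
    (t : ℝ) (hden : (x3 t - x2 t) + k * (x1 t - x2 t) ≠ 0) :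
    HasDerivAt x (b1 t + b2 t * x t + b3 t * (x t) ^ 2) t := by
  subst hx
  exact HasDerivAt.riccatiSuperposition (he1 t ▸ (hd1 t).hasDerivAt)
    (he2 t ▸ (hd2 t).hasDerivAt) (he3 t ▸ (hd3 t).hasDerivAt) hden

/-- Superposition rule for the Riccati equation: if `x₁, x₂, x₃` are three
pairwise distinct solutions of `dx/dt = b₁(t) + b₂(t)x + b₃(t)x²`, then for any
constant `k` the function
`x = (x₁(x₃−x₂) + k x₃(x₁−x₂)) / ((x₃−x₂) + k(x₁−x₂))`
is also a solution, wherever the denominator is nonzero. -/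
theorem riccati_superposition_rule
    (b1 b2 b3 x1 x2 x3 : ℝ → ℝ)
    (hb1 : Continuous b1) (hb2 : Continuous b2) (hb3 : Continuous b3)
    (hd1 : Differentiable ℝ x1) (hd2 : Differentiable ℝ x2)
    (hd3 : Differentiable ℝ x3)
    (he1 : ∀ t, deriv x1 t = b1 t + b2 t * x1 t + b3 t * (x1 t) ^ 2)
    (he2 : ∀ t, deriv x2 t = b1 t + b2 t * x2 t + b3 t * (x2 t) ^ 2)
    (he3 : ∀ t, deriv x3 t = b1 t + b2 t * x3 t + b3 t * (x3 t) ^ 2)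
    (hdist : ∀ t, x1 t ≠ x2 t ∧ x1 t ≠ x3 t ∧ x2 t ≠ x3 t)
    (k : ℝ) (x : ℝ → ℝ)
    (hx : x = fun s =>
      (x1 s * (x3 s - x2 s) + k * x3 s * (x1 s - x2 s)) /
        ((x3 s - x2 s) + k * (x1 s - x2 s)))
    (t : ℝ) (hden : (x3 t - x2 t) + k * (x1 t - x2 t) ≠ 0) :
    HasDerivAt x (b1 t + b2 t * x t + b3 t * (x t) ^ 2) t :=
  riccati_superposition_rule_general b1 b2 b3 x1 x2 x3 hd1 hd2 hd3 he1 he2 he3 k x hx t hden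
end

section
/- For each k with 2 ≤ k ≤ n, the function I_L^(k)(q,p) = ∑_{1≤i<j≤k} [ (q_i p_j − q_j p_i)² + c_i q_j²/q_i² + c_j q_i²/q_j² ] + ∑_{i=1}^k c_i equals h₋^(k) h₊^(k) − (h₃^(k))², where h₋^(k) = ∑_{i=1}^k q_i², h₊^(k) = ∑_{i=1}^k (p_i² + c_i/q_i²), h₃^(k) = ∑_{i=1}^k q_i p_i. -/
/-!
Expanding `h₋ h₊ − h₃²` gives the double sum over all `(i, j)` of
`q_i² (p_j² + c_j / q_j²) − q_i p_i q_j p_j`. For `i < j` the terms `(i, j)` and `(j, i)` add up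
to `(q_i p_j − q_j p_i)² + c_i q_j² / q_i² + c_j q_i² / q_j²`, as in Lagrange's identity, and the
diagonal term `(i, i)` is `c_i`.
-/

open Finset

namespace Finset

theorem sum_mul_sum_sub_sq_sum {ι R : Type*} [CommRing R] (s : Finset ι)
    (a b x : ι → R) :
    (∑ i ∈ s, a i) * (∑ i ∈ s, b i) - (∑ i ∈ s, x i) ^ 2 =
      ∑ i ∈ s, ∑ j ∈ s, (a i * b j - x i * x j) := by
  simp only [sq, sum_mul_sum, ← sum_sub_distrib]

theorem sum_sum_eq_sum_sum_lt_add_sum_diag {ι M : Type*} [LinearOrder ι] [AddCommMonoid M]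
    (s : Finset ι) (f : ι → ι → M) :
    ∑ i ∈ s, ∑ j ∈ s, f i j =
      ∑ i ∈ s, ∑ j ∈ s, (if i < j then f i j + f j i else 0) + ∑ i ∈ s, f i i := by
  have htrichotomy : ∀ i j, f i j =
      (if i < j then f i j else 0) + (if j < i then f i j else 0) + (if i = j then f i j else 0) := by
    intro i j
    rcases lt_trichotomy i j with h | rfl | h
    · simp [h, h.ne, h.asymm]
    · simp
    · simp [h, h.ne', h.asymm]
  have hswap : ∑ i ∈ s, ∑ j ∈ s, (if j < i then f i j else 0) =
      ∑ i ∈ s, ∑ j ∈ s, (if i < j then f j i else 0) := sum_comm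
  have hdiag : ∑ i ∈ s, ∑ j ∈ s, (if i = j then f i j else 0) = ∑ i ∈ s, f i i :=
    sum_congr rfl fun i hi => by rw [sum_ite_eq, if_pos hi]
  calc ∑ i ∈ s, ∑ j ∈ s, f i j
      = ∑ i ∈ s, ∑ j ∈ s, (if i < j then f i j else 0) +
          ∑ i ∈ s, ∑ j ∈ s, (if j < i then f i j else 0) +
          ∑ i ∈ s, ∑ j ∈ s, (if i = j then f i j else 0) := by
        simp only [← sum_add_distrib, ← htrichotomy]
    _ = _ := by
        rw [hswap, hdiag, ← sum_add_distrib]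
        simp only [← sum_add_distrib, ← ite_add_zero]

end Finset

theorem sq_mul_add_div_sq_sub_sq {K : Type*} [Field K] {c q : K} (hq : c ≠ 0 → q ≠ 0) (p : K) :
    q ^ 2 * (p ^ 2 + c / q ^ 2) - q * p * (q * p) = c := by
  by_cases hc : c = 0
  · simp only [hc, zero_div, add_zero]
    ring
  · field_simp [hq hc]
    ring

theorem sum_sq_mul_sum_add_div_sq_sub_sq_sum_mul {ι K : Type*} [LinearOrder ι] [Field K]
    (s : Finset ι) (c q p : ι → K) (hq : ∀ i ∈ s, c i ≠ 0 → q i ≠ 0) :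
    (∑ i ∈ s, q i ^ 2) * (∑ i ∈ s, (p i ^ 2 + c i / q i ^ 2)) - (∑ i ∈ s, q i * p i) ^ 2 =
      ∑ i ∈ s, ∑ j ∈ s, (if i < j then
          (q i * p j - q j * p i) ^ 2 + c i * q j ^ 2 / q i ^ 2 + c j * q i ^ 2 / q j ^ 2
        else 0) + ∑ i ∈ s, c i := by
  rw [sum_mul_sum_sub_sq_sum, sum_sum_eq_sum_sum_lt_add_sum_diag,
    sum_congr rfl fun i hi => sq_mul_add_div_sq_sub_sq (hq i hi) (p i)]
  congr 1
  refine sum_congr rfl fun i _ => sum_congr rfl fun j _ => if_congr Iff.rfl ?_ rfl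
  ring

theorem casimir_coproduct_identity_general (n k : ℕ)
    (c : Fin n → ℝ) (q p : Fin n → ℝ) (hq : ∀ i, c i ≠ 0 → q i ≠ 0) :
    (∑ i ∈ univ.filter (fun i : Fin n => (i : ℕ) < k),
       ∑ j ∈ univ.filter (fun j : Fin n => (j : ℕ) < k),
         (if i < j then
            (q i * p j - q j * p i) ^ 2 +
              c i * (q j) ^ 2 / (q i) ^ 2 + c j * (q i) ^ 2 / (q j) ^ 2
          else 0)) +
      ∑ i ∈ univ.filter (fun i : Fin n => (i : ℕ) < k), c i =
    (∑ i ∈ univ.filter (fun i : Fin n => (i : ℕ) < k), (q i) ^ 2) *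
      (∑ i ∈ univ.filter (fun i : Fin n => (i : ℕ) < k),
        ((p i) ^ 2 + c i / (q i) ^ 2)) -
      (∑ i ∈ univ.filter (fun i : Fin n => (i : ℕ) < k), q i * p i) ^ 2 :=
  (sum_sq_mul_sum_add_div_sq_sub_sq_sum_mul _ c q p fun i _ => hq i).symm

/-- For `2 ≤ k ≤ n`, the left Casimir function
`I_L^(k) = ∑_{1≤i<j≤k} [(q_i p_j − q_j p_i)² + c_i q_j²/q_i² + c_j q_i²/q_j²] + ∑_{i≤k} c_i`
equals `h₋^(k) h₊^(k) − (h₃^(k))²`, where `h₋^(k) = ∑_{i≤k} q_i²`,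
`h₊^(k) = ∑_{i≤k} (p_i² + c_i/q_i²)`, `h₃^(k) = ∑_{i≤k} q_i p_i`
(on the set where `q_i ≠ 0` whenever `c_i ≠ 0`). -/
theorem casimir_coproduct_identity (n k : ℕ) (hk2 : 2 ≤ k) (hkn : k ≤ n)
    (c : Fin n → ℝ) (q p : Fin n → ℝ) (hq : ∀ i, c i ≠ 0 → q i ≠ 0) :
    (∑ i ∈ univ.filter (fun i : Fin n => (i : ℕ) < k),
       ∑ j ∈ univ.filter (fun j : Fin n => (j : ℕ) < k),
         (if i < j then
            (q i * p j - q j * p i) ^ 2 +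
              c i * (q j) ^ 2 / (q i) ^ 2 + c j * (q i) ^ 2 / (q j) ^ 2
          else 0)) +
      ∑ i ∈ univ.filter (fun i : Fin n => (i : ℕ) < k), c i =
    (∑ i ∈ univ.filter (fun i : Fin n => (i : ℕ) < k), (q i) ^ 2) *
      (∑ i ∈ univ.filter (fun i : Fin n => (i : ℕ) < k),
        ((p i) ^ 2 + c i / (q i) ^ 2)) -
      (∑ i ∈ univ.filter (fun i : Fin n => (i : ℕ) < k), q i * p i) ^ 2 :=
  casimir_coproduct_identity_general n k c q p hq
end

section
/- For each k with 2 ≤ k ≤ n, the function I_L^(k) = h₋^(k) h₊^(k) − (h₃^(k))² (with h₋^(k) = ∑_{i≤k} q_i², h₊^(k) = ∑_{i≤k}(p_i² + c_i/q_i²), h₃^(k) = ∑_{i≤k} q_i p_i) Poisson-commutes with each of the full functions h₋ = ∑_{i=1}^n q_i², h₊ = ∑_{i=1}^n (p_i² + c_i/q_i²), h₃ = ∑_{i=1}^n q_i p_i, i.e. {I_L^(k), h₋} = {I_L^(k), h₊} = {I_L^(k), h₃} = 0. -/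
/-!
Restricting the generators to an index set `S` gives functions `h₋^S, h₊^S, h₃^S` whose brackets
with the full generators are computed coordinatewise, and coordinates outside `S` contribute
nothing: `{h₋^S, h₊} = 4 h₃^S`, `{h₋^S, h₃} = 2 h₋^S`, `{h₊^S, h₋} = -4 h₃^S`,
`{h₊^S, h₃} = -2 h₊^S`, `{h₃^S, h₋} = -2 h₋^S`, `{h₃^S, h₊} = 2 h₊^S`, the others vanishing.
So the full `sl₂` acts on the span of `h₋^S, h₊^S, h₃^S` as the `S`-copy of `sl₂` acts on itself,
and by the Leibniz rule it annihilates the Casimir `h₋^S h₊^S - (h₃^S)²`.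
-/

open Finset

section PartialDerivatives

variable {m : ℕ}

def SeparatelyDifferentiableAt (f : (Fin m → ℝ) → ℝ) (x : Fin m → ℝ) : Prop :=
  ∀ i, DifferentiableAt ℝ (fun t => f (Function.update x i t)) (x i)

lemma sum_apply_update (s : Finset (Fin m)) (g : Fin m → ℝ → ℝ) (x : Fin m → ℝ) (j : Fin m)
    (t : ℝ) :
    ∑ i ∈ s, g i (Function.update x j t i) =
      (if j ∈ s then g j t else 0) + ∑ i ∈ s.erase j, g i (x i) := by
  simp only [Function.apply_update g x j t]
  split_ifs with hj
  · rw [sum_update_of_mem hj, sdiff_singleton_eq_erase]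
  · rw [sum_update_of_notMem hj, erase_eq_of_notMem hj, zero_add]

lemma pd_sum (s : Finset (Fin m)) (g : Fin m → ℝ → ℝ) (x : Fin m → ℝ) (j : Fin m) :
    pd (fun y => ∑ i ∈ s, g i (y i)) x j = if j ∈ s then deriv (g j) (x j) else 0 := by
  simp only [pd, sum_apply_update, deriv_add_const]
  split_ifs <;> simp

lemma separatelyDifferentiableAt_sum {s : Finset (Fin m)} {g : Fin m → ℝ → ℝ}
    {x : Fin m → ℝ} (hg : ∀ i ∈ s, DifferentiableAt ℝ (g i) (x i)) :
    SeparatelyDifferentiableAt (fun y => ∑ i ∈ s, g i (y i)) x := by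
  intro j
  simp only [sum_apply_update]
  apply DifferentiableAt.add_const
  split_ifs with hj
  · exact hg j hj
  · exact differentiableAt_const (0 : ℝ)

lemma pd_mul_sub_sq {a b c : (Fin m → ℝ) → ℝ} {x : Fin m → ℝ}
    (ha : SeparatelyDifferentiableAt a x) (hb : SeparatelyDifferentiableAt b x)
    (hc : SeparatelyDifferentiableAt c x) (i : Fin m) :
    pd (fun y => a y * b y - c y ^ 2) x i =
      pd a x i * b x + a x * pd b x i - 2 * c x * pd c x i := by
  have h := (((ha i).hasDerivAt.mul (hb i).hasDerivAt).sub ((hc i).hasDerivAt.pow 2)).deriv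
  simp only [Function.update_eq_self] at h
  refine h.trans ?_
  simp only [pd]
  push_cast
  ring

end PartialDerivatives

section PoissonBracket

variable {n : ℕ}

lemma pbracket_mul_sub_sq (a b c h : (Fin n → ℝ) → (Fin n → ℝ) → ℝ) (q p : Fin n → ℝ)
    (haq : SeparatelyDifferentiableAt (fun q' => a q' p) q)
    (hbq : SeparatelyDifferentiableAt (fun q' => b q' p) q)
    (hcq : SeparatelyDifferentiableAt (fun q' => c q' p) q)
    (hap : SeparatelyDifferentiableAt (a q) p) (hbp : SeparatelyDifferentiableAt (b q) p)
    (hcp : SeparatelyDifferentiableAt (c q) p) :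
    pbracket n (fun q p => a q p * b q p - c q p ^ 2) h q p =
      b q p * pbracket n a h q p + a q p * pbracket n b h q p -
        2 * c q p * pbracket n c h q p := by
  simp only [pbracket, pd_mul_sub_sq haq hbq hcq, pd_mul_sub_sq hap hbp hcp, mul_sum,
    ← sum_add_distrib, ← sum_sub_distrib]
  exact sum_congr rfl fun _ _ => by ring

lemma pbracket_eq_sum_of_pd_eq {f g : (Fin n → ℝ) → (Fin n → ℝ) → ℝ} {s : Finset (Fin n)}
    {q p fq fp : Fin n → ℝ}
    (hfq : ∀ j, pd (fun q' => f q' p) q j = if j ∈ s then fq j else 0)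
    (hfp : ∀ j, pd (f q) p j = if j ∈ s then fp j else 0) :
    pbracket n f g q p = ∑ j ∈ s, (fq j * pd (g q) p j - pd (fun q' => g q' p) q j * fp j) := by
  rw [pbracket, ← sum_subset (subset_univ s) fun j _ hj => by simp [hfq, hfp, hj]]
  exact sum_congr rfl fun j hj => by simp [hfq, hfp, hj]

end PoissonBracket

lemma hasDerivAt_const_add_div_sq {a b x : ℝ} (hx : b ≠ 0 → x ≠ 0) :
    HasDerivAt (fun t => a + b / t ^ 2) (-2 * b / x ^ 3) x := by
  rcases eq_or_ne b 0 with rfl | hb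
  · simpa using hasDerivAt_const x a
  · have hx0 := hx hb
    refine (((hasDerivAt_const x b).div (hasDerivAt_pow 2 x) (pow_ne_zero 2 hx0)).const_add
      a).congr_deriv ?_
    field_simp
    ring

section Sl2

variable {n : ℕ} (c : Fin n → ℝ) (s : Finset (Fin n))

def hMinusOn : (Fin n → ℝ) → (Fin n → ℝ) → ℝ := fun q _ => ∑ i ∈ s, q i ^ 2

noncomputable def hPlusOn : (Fin n → ℝ) → (Fin n → ℝ) → ℝ :=
  fun q p => ∑ i ∈ s, (p i ^ 2 + c i / q i ^ 2)

def hThreeOn : (Fin n → ℝ) → (Fin n → ℝ) → ℝ := fun q p => ∑ i ∈ s, q i * p i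

noncomputable def casimirOn : (Fin n → ℝ) → (Fin n → ℝ) → ℝ :=
  fun q p => hMinusOn s q p * hPlusOn c s q p - hThreeOn s q p ^ 2

variable {c} (q p : Fin n → ℝ) (j : Fin n)

lemma pd_q_hMinusOn : pd (fun q' => hMinusOn s q' p) q j = if j ∈ s then 2 * q j else 0 :=
  (pd_sum s (fun _ t => t ^ 2) q j).trans (by simp)

lemma pd_p_hMinusOn : pd (hMinusOn s q) p j = 0 := by
  simp [hMinusOn, pd]

lemma pd_q_hPlusOn (hq : ∀ i, c i ≠ 0 → q i ≠ 0) :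
    pd (fun q' => hPlusOn c s q' p) q j = if j ∈ s then -2 * c j / q j ^ 3 else 0 :=
  (pd_sum s (fun i t => p i ^ 2 + c i / t ^ 2) q j).trans
    (by rw [(hasDerivAt_const_add_div_sq (hq j)).deriv])

lemma pd_p_hPlusOn : pd (hPlusOn c s q) p j = if j ∈ s then 2 * p j else 0 :=
  (pd_sum s (fun i t => t ^ 2 + c i / q i ^ 2) p j).trans (by simp)

lemma pd_q_hThreeOn : pd (fun q' => hThreeOn s q' p) q j = if j ∈ s then p j else 0 :=
  (pd_sum s (fun i t => t * p i) q j).trans (by simp)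

lemma pd_p_hThreeOn : pd (hThreeOn s q) p j = if j ∈ s then q j else 0 :=
  (pd_sum s (fun i t => q i * t) p j).trans (by simp)

lemma separatelyDifferentiableAt_q_hMinusOn :
    SeparatelyDifferentiableAt (fun q' => hMinusOn s q' p) q :=
  separatelyDifferentiableAt_sum (g := fun _ t => t ^ 2) fun _ _ => by fun_prop

lemma separatelyDifferentiableAt_p_hMinusOn : SeparatelyDifferentiableAt (hMinusOn s q) p :=
  fun _ => differentiableAt_const _

lemma separatelyDifferentiableAt_q_hPlusOn (hq : ∀ i, c i ≠ 0 → q i ≠ 0) :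
    SeparatelyDifferentiableAt (fun q' => hPlusOn c s q' p) q :=
  separatelyDifferentiableAt_sum (g := fun i t => p i ^ 2 + c i / t ^ 2) fun i _ =>
    (hasDerivAt_const_add_div_sq (hq i)).differentiableAt

lemma separatelyDifferentiableAt_p_hPlusOn : SeparatelyDifferentiableAt (hPlusOn c s q) p :=
  separatelyDifferentiableAt_sum (g := fun i t => t ^ 2 + c i / q i ^ 2) fun _ _ => by fun_prop

lemma separatelyDifferentiableAt_q_hThreeOn :
    SeparatelyDifferentiableAt (fun q' => hThreeOn s q' p) q :=
  separatelyDifferentiableAt_sum (g := fun i t => t * p i) fun _ _ => by fun_prop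

lemma separatelyDifferentiableAt_p_hThreeOn : SeparatelyDifferentiableAt (hThreeOn s q) p :=
  separatelyDifferentiableAt_sum (g := fun i t => q i * t) fun _ _ => by fun_prop

lemma pbracket_casimirOn (h : (Fin n → ℝ) → (Fin n → ℝ) → ℝ) (hq : ∀ i, c i ≠ 0 → q i ≠ 0) :
    pbracket n (casimirOn c s) h q p =
      hPlusOn c s q p * pbracket n (hMinusOn s) h q p +
        hMinusOn s q p * pbracket n (hPlusOn c s) h q p -
          2 * hThreeOn s q p * pbracket n (hThreeOn s) h q p :=
  pbracket_mul_sub_sq _ _ _ h q p (separatelyDifferentiableAt_q_hMinusOn s q p)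
    (separatelyDifferentiableAt_q_hPlusOn s q p hq) (separatelyDifferentiableAt_q_hThreeOn s q p)
    (separatelyDifferentiableAt_p_hMinusOn s q p) (separatelyDifferentiableAt_p_hPlusOn s q p)
    (separatelyDifferentiableAt_p_hThreeOn s q p)

end Sl2

section Brackets

variable {n : ℕ} {c : Fin n → ℝ} (s : Finset (Fin n)) (q p : Fin n → ℝ)

lemma pbracket_hMinusOn_hMinusOn : pbracket n (hMinusOn s) (hMinusOn univ) q p = 0 := by
  rw [pbracket_eq_sum_of_pd_eq (pd_q_hMinusOn s q p) (fp := 0) (by simp [pd_p_hMinusOn])]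
  simp [pd_p_hMinusOn]

lemma pbracket_hMinusOn_hPlusOn :
    pbracket n (hMinusOn s) (hPlusOn c univ) q p = 4 * hThreeOn s q p := by
  rw [pbracket_eq_sum_of_pd_eq (pd_q_hMinusOn s q p) (fp := 0) (by simp [pd_p_hMinusOn]),
    hThreeOn, mul_sum]
  exact sum_congr rfl fun j _ => by
    simp only [pd_p_hPlusOn, mem_univ, if_true, Pi.zero_apply]; ring

lemma pbracket_hMinusOn_hThreeOn :
    pbracket n (hMinusOn s) (hThreeOn univ) q p = 2 * hMinusOn s q p := by
  rw [pbracket_eq_sum_of_pd_eq (pd_q_hMinusOn s q p) (fp := 0) (by simp [pd_p_hMinusOn]),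
    hMinusOn, mul_sum]
  exact sum_congr rfl fun j _ => by
    simp only [pd_p_hThreeOn, mem_univ, if_true, Pi.zero_apply]; ring

lemma pbracket_hThreeOn_hMinusOn :
    pbracket n (hThreeOn s) (hMinusOn univ) q p = -2 * hMinusOn s q p := by
  rw [pbracket_eq_sum_of_pd_eq (pd_q_hThreeOn s q p) (pd_p_hThreeOn s q p), hMinusOn, mul_sum]
  exact sum_congr rfl fun j _ => by
    simp only [pd_p_hMinusOn, pd_q_hMinusOn, mem_univ, if_true]; ring

lemma pbracket_hThreeOn_hThreeOn : pbracket n (hThreeOn s) (hThreeOn univ) q p = 0 := by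
  rw [pbracket_eq_sum_of_pd_eq (pd_q_hThreeOn s q p) (pd_p_hThreeOn s q p)]
  exact sum_eq_zero fun j _ => by simp [pd_p_hThreeOn, pd_q_hThreeOn]

lemma pbracket_hPlusOn_hMinusOn (hq : ∀ i, c i ≠ 0 → q i ≠ 0) :
    pbracket n (hPlusOn c s) (hMinusOn univ) q p = -4 * hThreeOn s q p := by
  rw [pbracket_eq_sum_of_pd_eq (pd_q_hPlusOn s q p · hq) (pd_p_hPlusOn s q p), hThreeOn,
    mul_sum]
  exact sum_congr rfl fun j _ => by
    simp only [pd_p_hMinusOn, pd_q_hMinusOn, mem_univ, if_true]; ring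

lemma pbracket_hPlusOn_hPlusOn (hq : ∀ i, c i ≠ 0 → q i ≠ 0) :
    pbracket n (hPlusOn c s) (hPlusOn c univ) q p = 0 := by
  rw [pbracket_eq_sum_of_pd_eq (pd_q_hPlusOn s q p · hq) (pd_p_hPlusOn s q p)]
  exact sum_eq_zero fun j _ => by simp [pd_p_hPlusOn, pd_q_hPlusOn univ q p j hq]

lemma pbracket_hPlusOn_hThreeOn (hq : ∀ i, c i ≠ 0 → q i ≠ 0) :
    pbracket n (hPlusOn c s) (hThreeOn univ) q p = -2 * hPlusOn c s q p := by
  rw [pbracket_eq_sum_of_pd_eq (pd_q_hPlusOn s q p · hq) (pd_p_hPlusOn s q p), hPlusOn,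
    mul_sum]
  refine sum_congr rfl fun j _ => ?_
  simp only [pd_p_hThreeOn, pd_q_hThreeOn, mem_univ, if_true]
  rcases eq_or_ne (c j) 0 with hc | hc
  · rw [hc]; ring
  · field_simp [hq j hc]
    ring

lemma pbracket_hThreeOn_hPlusOn (hq : ∀ i, c i ≠ 0 → q i ≠ 0) :
    pbracket n (hThreeOn s) (hPlusOn c univ) q p = 2 * hPlusOn c s q p := by
  rw [pbracket_eq_sum_of_pd_eq (pd_q_hThreeOn s q p) (pd_p_hThreeOn s q p), hPlusOn, mul_sum]
  refine sum_congr rfl fun j _ => ?_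
  simp only [pd_p_hPlusOn, pd_q_hPlusOn univ q p j hq, mem_univ, if_true]
  rcases eq_or_ne (c j) 0 with hc | hc
  · rw [hc]; ring
  · field_simp [hq j hc]
    ring

end Brackets

theorem left_casimir_commutes_with_sl2_general (n k : ℕ)
    (c : Fin n → ℝ)
    (ILk hminus hplus h3 : (Fin n → ℝ) → (Fin n → ℝ) → ℝ)
    (hILk : ILk = fun q p =>
      (∑ i ∈ univ.filter (fun i : Fin n => (i : ℕ) < k), (q i) ^ 2) *
        (∑ i ∈ univ.filter (fun i : Fin n => (i : ℕ) < k),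
          ((p i) ^ 2 + c i / (q i) ^ 2)) -
        (∑ i ∈ univ.filter (fun i : Fin n => (i : ℕ) < k), q i * p i) ^ 2)
    (hhm : hminus = fun q _ => ∑ i, (q i) ^ 2)
    (hhp : hplus = fun q p => ∑ i, ((p i) ^ 2 + c i / (q i) ^ 2))
    (hh3 : h3 = fun q p => ∑ i, q i * p i)
    (q p : Fin n → ℝ) (hq : ∀ i, c i ≠ 0 → q i ≠ 0) :
    pbracket n ILk hminus q p = 0 ∧
    pbracket n ILk hplus q p = 0 ∧
    pbracket n ILk h3 q p = 0 := by
  set S := univ.filter (fun i : Fin n => (i : ℕ) < k)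
  obtain rfl : ILk = casimirOn c S := hILk
  obtain rfl : hminus = hMinusOn univ := hhm
  obtain rfl : hplus = hPlusOn c univ := hhp
  obtain rfl : h3 = hThreeOn univ := hh3
  simp only [pbracket_casimirOn S q p _ hq, pbracket_hMinusOn_hMinusOn,
    pbracket_hMinusOn_hPlusOn, pbracket_hMinusOn_hThreeOn, pbracket_hPlusOn_hMinusOn S q p hq,
    pbracket_hPlusOn_hPlusOn S q p hq, pbracket_hPlusOn_hThreeOn S q p hq,
    pbracket_hThreeOn_hMinusOn, pbracket_hThreeOn_hPlusOn S q p hq, pbracket_hThreeOn_hThreeOn]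
  exact ⟨by ring, by ring, by ring⟩

/-- For `2 ≤ k ≤ n`, the function `I_L^(k) = h₋^(k) h₊^(k) − (h₃^(k))²`
(built from the partial sums over the first `k` indices) Poisson-commutes with
each of the full functions `h₋ = ∑ q_i²`, `h₊ = ∑ (p_i² + c_i/q_i²)`,
`h₃ = ∑ q_i p_i` (on the set where `q_i ≠ 0` whenever `c_i ≠ 0`). -/
theorem left_casimir_commutes_with_sl2 (n k : ℕ) (hk2 : 2 ≤ k) (hkn : k ≤ n)
    (c : Fin n → ℝ)
    (ILk hminus hplus h3 : (Fin n → ℝ) → (Fin n → ℝ) → ℝ)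
    (hILk : ILk = fun q p =>
      (∑ i ∈ univ.filter (fun i : Fin n => (i : ℕ) < k), (q i) ^ 2) *
        (∑ i ∈ univ.filter (fun i : Fin n => (i : ℕ) < k),
          ((p i) ^ 2 + c i / (q i) ^ 2)) -
        (∑ i ∈ univ.filter (fun i : Fin n => (i : ℕ) < k), q i * p i) ^ 2)
    (hhm : hminus = fun q _ => ∑ i, (q i) ^ 2)
    (hhp : hplus = fun q p => ∑ i, ((p i) ^ 2 + c i / (q i) ^ 2))
    (hh3 : h3 = fun q p => ∑ i, q i * p i)
    (q p : Fin n → ℝ) (hq : ∀ i, c i ≠ 0 → q i ≠ 0) :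
    pbracket n ILk hminus q p = 0 ∧
    pbracket n ILk hplus q p = 0 ∧
    pbracket n ILk h3 q p = 0 :=
  left_casimir_commutes_with_sl2_general n k c ILk hminus hplus h3 hILk hhm hhp hh3 q p hq
end

section
/- The left-invariants are in involution: for 2 ≤ k ≤ l ≤ n, the functions I_L^(k) = h₋^(k) h₊^(k) − (h₃^(k))² and I_L^(l) = h₋^(l) h₊^(l) − (h₃^(l))² (defined with partial sums over the first k, respectively first l, indices) satisfy {I_L^(k), I_L^(l)} = 0 with respect to the canonical Poisson bracket on T*ℝⁿ. -/
open Finset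

/-- The left-invariant `I_L^(k) = h₋^(k) h₊^(k) − (h₃^(k))²` built from the
partial sums over the first `k` indices. -/
noncomputable def IL (n k : ℕ) (c : Fin n → ℝ)
    (q p : Fin n → ℝ) : ℝ :=
  (∑ i ∈ univ.filter (fun i : Fin n => (i : ℕ) < k), (q i) ^ 2) *
    (∑ i ∈ univ.filter (fun i : Fin n => (i : ℕ) < k),
      ((p i) ^ 2 + c i / (q i) ^ 2)) -
    (∑ i ∈ univ.filter (fun i : Fin n => (i : ℕ) < k), q i * p i) ^ 2

/-!
Write `(A, B, C) = (h₋, h₊, h₃)` summed over the first `k` indices and `(A', B', C')` the same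
over the first `l`. Only the indices `j < k` contribute to `{I^(k), I^(l)}`, and after inserting
the explicit gradients of `I = h₋ h₊ − h₃²` the `j`-th term becomes
`α q_j p_j + β q_j² + γ (p_j² + c_j / q_j²)` with `(β, γ, α) = 4 (A', B', C') × (A, B, C)`.
Summing over `j < k` gives `α C + β A + γ B`, the scalar product of `(A, B, C)` with a vector
orthogonal to it, hence `0`.
-/

section PartialSums

variable {ι : Type*}

noncomputable def hMinus (S : Finset ι) (q : ι → ℝ) : ℝ := ∑ i ∈ S, q i ^ 2

noncomputable def hPlus (S : Finset ι) (c q p : ι → ℝ) : ℝ := ∑ i ∈ S, (p i ^ 2 + c i / q i ^ 2)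

noncomputable def hThree (S : Finset ι) (q p : ι → ℝ) : ℝ := ∑ i ∈ S, q i * p i

noncomputable def casimir (S : Finset ι) (c q p : ι → ℝ) : ℝ :=
  hMinus S q * hPlus S c q p - hThree S q p ^ 2

variable [DecidableEq ι]

theorem hasDerivAt_sum_update (S : Finset ι) (g : ι → ℝ → ℝ) (x : ι → ℝ) (j : ι) {d : ℝ}
    (hd : HasDerivAt (g j) d (x j)) :
    HasDerivAt (fun t => ∑ i ∈ S, g i (Function.update x j t i))
      (if j ∈ S then d else 0) (x j) := by
  have hterm : ∀ i ∈ S, HasDerivAt (fun t => g i (Function.update x j t i))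
      (if i = j then d else 0) (x j) := by
    intro i _
    by_cases hij : i = j
    · subst hij
      simpa using hd
    · simpa only [Function.update_of_ne hij, if_neg hij] using hasDerivAt_const _ _
  simpa only [sum_ite_eq'] using HasDerivAt.fun_sum hterm

theorem hasDerivAt_const_div_sq {a x : ℝ} (hx : a ≠ 0 → x ≠ 0) :
    HasDerivAt (fun t => a / t ^ 2) (-2 * a / x ^ 3) x := by
  rcases eq_or_ne a 0 with rfl | ha
  · simpa using hasDerivAt_const x (0 : ℝ)
  · have hx := hx ha
    refine ((hasDerivAt_const x a).fun_div (hasDerivAt_pow 2 x) (pow_ne_zero 2 hx)).congr_deriv ?_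
    field_simp
    ring

theorem hasDerivAt_casimir_update_q (S : Finset ι) {c q : ι → ℝ} (p : ι → ℝ)
    (hq : ∀ i, c i ≠ 0 → q i ≠ 0) (j : ι) :
    HasDerivAt (fun t => casimir S c (Function.update q j t) p)
      (if j ∈ S then 2 * q j * hPlus S c q p - 2 * c j / q j ^ 3 * hMinus S q
        - 2 * hThree S q p * p j else 0) (q j) := by
  have hM := hasDerivAt_sum_update S (fun _ s => s ^ 2) q j (hasDerivAt_pow 2 (q j))
  have hP := hasDerivAt_sum_update S (fun i s => p i ^ 2 + c i / s ^ 2) q j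
    ((hasDerivAt_const_div_sq (hq j)).const_add _)
  have hT := hasDerivAt_sum_update S (fun i s => s * p i) q j ((hasDerivAt_id _).mul_const _)
  refine ((hM.mul hP).sub (hT.pow 2)).congr_deriv ?_
  rw [Function.update_eq_self]
  unfold hMinus hPlus hThree
  split_ifs
  · push_cast
    ring
  · ring

theorem hasDerivAt_casimir_update_p (S : Finset ι) (c q p : ι → ℝ) (j : ι) :
    HasDerivAt (fun t => casimir S c q (Function.update p j t))
      (if j ∈ S then 2 * p j * hMinus S q - 2 * hThree S q p * q j else 0) (p j) := by
  have hP := hasDerivAt_sum_update S (fun i s => s ^ 2 + c i / q i ^ 2) p j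
    ((hasDerivAt_pow 2 (p j)).add_const _)
  have hT := hasDerivAt_sum_update S (fun i s => q i * s) p j ((hasDerivAt_id _).const_mul _)
  refine ((hP.const_mul (hMinus S q)).sub (hT.pow 2)).congr_deriv ?_
  rw [Function.update_eq_self]
  unfold hThree
  split_ifs
  · push_cast
    ring
  · ring

end PartialSums

section PoissonBracket

variable {n : ℕ} {c q p : Fin n → ℝ}

theorem pd_casimir_q (S : Finset (Fin n)) (hq : ∀ i, c i ≠ 0 → q i ≠ 0) (j : Fin n) :
    pd (fun q' => casimir S c q' p) q j =
      if j ∈ S then 2 * q j * hPlus S c q p - 2 * c j / q j ^ 3 * hMinus S q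
        - 2 * hThree S q p * p j else 0 :=
  (hasDerivAt_casimir_update_q S p hq j).deriv

theorem pd_casimir_p (S : Finset (Fin n)) (j : Fin n) :
    pd (casimir S c q) p j =
      if j ∈ S then 2 * p j * hMinus S q - 2 * hThree S q p * q j else 0 :=
  (hasDerivAt_casimir_update_p S c q p j).deriv

theorem pbracket_casimir_eq_zero_of_subset {S T : Finset (Fin n)} (hST : S ⊆ T)
    (hq : ∀ i, c i ≠ 0 → q i ≠ 0) :
    pbracket n (casimir S c) (casimir T c) q p = 0 := by
  set A := hMinus S q
  set B := hPlus S c q p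
  set C := hThree S q p
  set A' := hMinus T q
  set B' := hPlus T c q p
  set C' := hThree T q p
  have hterm : ∀ j ∈ S,
      pd (fun q' => casimir S c q' p) q j * pd (casimir T c q) p j -
          pd (fun q' => casimir T c q' p) q j * pd (casimir S c q) p j =
        4 * (B * A' - B' * A) * (q j * p j) + 4 * (B' * C - B * C') * q j ^ 2 +
          4 * (A * C' - A' * C) * (p j ^ 2 + c j / q j ^ 2) := by
    intro j hj
    have hcq : c j / q j ^ 3 * q j = c j / q j ^ 2 := by
      rcases eq_or_ne (q j) 0 with h | h
      · simp [h]
      · field_simp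
    simp only [pd_casimir_q _ hq, pd_casimir_p, if_pos hj, if_pos (hST hj)]
    linear_combination 4 * (A * C' - A' * C) * hcq
  calc pbracket n (casimir S c) (casimir T c) q p
      = ∑ j ∈ S, (4 * (B * A' - B' * A) * (q j * p j) + 4 * (B' * C - B * C') * q j ^ 2 +
          4 * (A * C' - A' * C) * (p j ^ 2 + c j / q j ^ 2)) := by
        rw [pbracket, ← sum_subset (subset_univ S)]
        · exact sum_congr rfl hterm
        · intro j _ hj
          simp [pd_casimir_q _ hq, pd_casimir_p, hj]
    _ = 4 * (B * A' - B' * A) * C + 4 * (B' * C - B * C') * A + 4 * (A * C' - A' * C) * B := by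
        rw [sum_add_distrib, sum_add_distrib, ← mul_sum, ← mul_sum, ← mul_sum]
        rfl
    _ = 0 := by ring

end PoissonBracket

theorem left_invariants_in_involution_general (n k l : ℕ)
    (hkl : k ≤ l) (c : Fin n → ℝ)
    (q p : Fin n → ℝ) (hq : ∀ i, c i ≠ 0 → q i ≠ 0) :
    pbracket n (IL n k c) (IL n l c) q p = 0 := by
  have hsub : univ.filter (fun i : Fin n => (i : ℕ) < k) ⊆ univ.filter (fun i => (i : ℕ) < l) :=
    fun i hi => by simp only [mem_filter, mem_univ, true_and] at hi ⊢; omega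
  exact pbracket_casimir_eq_zero_of_subset hsub hq

/-- The left-invariants are in involution: for `2 ≤ k ≤ l ≤ n`,
`{I_L^(k), I_L^(l)} = 0` with respect to the canonical Poisson bracket
(on the set where `q_i ≠ 0` whenever `c_i ≠ 0`). -/
theorem left_invariants_in_involution (n k l : ℕ)
    (hk2 : 2 ≤ k) (hkl : k ≤ l) (hln : l ≤ n) (c : Fin n → ℝ)
    (q p : Fin n → ℝ) (hq : ∀ i, c i ≠ 0 → q i ≠ 0) :
    pbracket n (IL n k c) (IL n l c) q p = 0 :=
  left_invariants_in_involution_general n k l hkl c q p hq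
end
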